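/- arXiv:1603.05033 — 3 statements merged into one kernel-verified Lean document; each statement's English description precedes it below -/
import Mathlib

section
/- Let a < b be real numbers, p ∈ [1,∞) and u ∈ L^p(a,b). Then ‖I_{a+}^s[u] − u‖_{L^p(a,b)} → 0 as s → 0+. -/
/-!
For `s > 0`, `I_{a+}^s` is the integral operator with kernel `k_s(x - t)`, where
`k_s(r) = r₊^(s-1) / Γ(s)`. On `(a, b)` all its row and column integrals are at most
`(b - a)^s / Γ(s + 1)`, so by the Schur test its norm on `Lᵖ(a, b)` is at most this constant,
which tends to `1` as `s → 0⁺`. For continuous `g` the kernels form an approximate identity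
at every `x ∈ (a, b)`, so `I_{a+}^s g → g` pointwise and boundedly, hence in `Lᵖ` by
dominated convergence. Density of continuous functions in `Lᵖ` gives the general case.
-/

open MeasureTheory Set Filter ENNReal

/-- The left Riemann–Liouville fractional integral of order `σ` with base point `a`. -/
noncomputable def RLint (a σ : ℝ) (u : ℝ → ℝ) (x : ℝ) : ℝ :=
  (Real.Gamma σ)⁻¹ * ∫ t in a..x, u t * (x - t) ^ (σ - 1)

open Topology

section SchurTest

variable {α β : Type*} [MeasurableSpace α] [MeasurableSpace β] {μ : Measure α} {ν : Measure β}

theorem rpow_lintegral_mul_le {P : ℝ} (hP : 1 ≤ P) {κ f : α → ℝ≥0∞} (hκ : AEMeasurable κ μ)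
    (hf : AEMeasurable f μ) :
    (∫⁻ y, κ y * f y ∂μ) ^ P ≤ (∫⁻ y, κ y ∂μ) ^ (P - 1) * ∫⁻ y, κ y * f y ^ P ∂μ := by
  have hP0 : 0 < P := by linarith
  have hsplit : ∀ y, (κ y * f y ^ P) ^ P⁻¹ * κ y ^ (1 - P⁻¹) = κ y * f y := fun y => by
    rw [ENNReal.mul_rpow_of_nonneg _ _ (by positivity), ← ENNReal.rpow_mul,
      mul_inv_cancel₀ hP0.ne', ENNReal.rpow_one, mul_right_comm,
      ← ENNReal.rpow_add_of_nonneg _ _ (by positivity) (by simpa using inv_le_one_of_one_le₀ hP),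
      add_sub_cancel, ENNReal.rpow_one]
  have holder := lintegral_mul_norm_pow_le (hκ.mul (hf.pow_const P)) hκ (inv_nonneg.2 hP0.le)
    (by simpa using inv_le_one_of_one_le₀ hP) (add_sub_cancel P⁻¹ 1)
  simp only [Pi.mul_apply, hsplit] at holder
  calc (∫⁻ y, κ y * f y ∂μ) ^ P
      ≤ ((∫⁻ y, κ y * f y ^ P ∂μ) ^ P⁻¹ * (∫⁻ y, κ y ∂μ) ^ (1 - P⁻¹)) ^ P := by gcongr
    _ = (∫⁻ y, κ y ∂μ) ^ (P - 1) * ∫⁻ y, κ y * f y ^ P ∂μ := by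
      rw [ENNReal.mul_rpow_of_nonneg _ _ hP0.le, ← ENNReal.rpow_mul, ← ENNReal.rpow_mul,
        inv_mul_cancel₀ hP0.ne', ENNReal.rpow_one, sub_mul, one_mul, inv_mul_cancel₀ hP0.ne',
        mul_comm]

theorem lintegral_lintegral_mul_le_of_lintegral_le [SFinite μ] [SFinite ν] {K : α → β → ℝ≥0∞}
    (hK : Measurable (Function.uncurry K)) {f : β → ℝ≥0∞} (hf : Measurable f) {C : ℝ≥0∞}
    (hC : ∀ᵐ y ∂ν, ∫⁻ x, K x y ∂μ ≤ C) :
    ∫⁻ x, ∫⁻ y, K x y * f y ∂ν ∂μ ≤ C * ∫⁻ y, f y ∂ν := by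
  calc ∫⁻ x, ∫⁻ y, K x y * f y ∂ν ∂μ = ∫⁻ y, ∫⁻ x, K x y * f y ∂μ ∂ν :=
        lintegral_lintegral_swap (hK.mul (hf.comp measurable_snd)).aemeasurable
    _ = ∫⁻ y, (∫⁻ x, K x y ∂μ) * f y ∂ν :=
        lintegral_congr fun y => lintegral_mul_const _ (hK.comp measurable_prodMk_right)
    _ ≤ ∫⁻ y, C * f y ∂ν := lintegral_mono_ae <| hC.mono fun y hy => by gcongr
    _ = C * ∫⁻ y, f y ∂ν := lintegral_const_mul _ hf

theorem eLpNorm_le_of_enorm_le_lintegral_kernel [SFinite μ] [SFinite ν] {E : Type*}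
    [NormedAddCommGroup E] {p : ℝ≥0∞} (hp : 1 ≤ p) (hp' : p ≠ ⊤) {K : α → β → ℝ≥0∞}
    (hK : Measurable (Function.uncurry K)) {f : β → ℝ≥0∞} (hf : Measurable f) {C : ℝ≥0∞}
    (hrow : ∀ᵐ x ∂μ, ∫⁻ y, K x y ∂ν ≤ C) (hcol : ∀ᵐ y ∂ν, ∫⁻ x, K x y ∂μ ≤ C)
    {F : α → E} (hF : ∀ᵐ x ∂μ, ‖F x‖ₑ ≤ ∫⁻ y, K x y * f y ∂ν) :
    eLpNorm F p μ ≤ C * eLpNorm f p ν := by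
  have hp0 : p ≠ 0 := (zero_lt_one.trans_le hp).ne'
  set P := p.toReal
  have hP : 1 ≤ P := by simpa using ENNReal.toReal_mono hp' hp
  have hP0 : 0 < P := by linarith
  have key : ∫⁻ x, ‖F x‖ₑ ^ P ∂μ ≤ C ^ P * ∫⁻ y, f y ^ P ∂ν :=
    calc ∫⁻ x, ‖F x‖ₑ ^ P ∂μ ≤ ∫⁻ x, C ^ (P - 1) * ∫⁻ y, K x y * f y ^ P ∂ν ∂μ := by
          refine lintegral_mono_ae ?_
          filter_upwards [hF, hrow] with x hFx hx
          calc ‖F x‖ₑ ^ P ≤ (∫⁻ y, K x y * f y ∂ν) ^ P := by gcongr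
            _ ≤ (∫⁻ y, K x y ∂ν) ^ (P - 1) * ∫⁻ y, K x y * f y ^ P ∂ν :=
              rpow_lintegral_mul_le hP (hK.comp measurable_prodMk_left).aemeasurable hf.aemeasurable
            _ ≤ C ^ (P - 1) * ∫⁻ y, K x y * f y ^ P ∂ν := by gcongr
      _ = C ^ (P - 1) * ∫⁻ x, ∫⁻ y, K x y * f y ^ P ∂ν ∂μ :=
          lintegral_const_mul _ (Measurable.lintegral_prod_right
            (hK.mul ((hf.pow_const P).comp measurable_snd)))
      _ ≤ C ^ (P - 1) * (C * ∫⁻ y, f y ^ P ∂ν) := by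
          gcongr
          exact lintegral_lintegral_mul_le_of_lintegral_le hK (hf.pow_const P) hcol
      _ = C ^ P * ∫⁻ y, f y ^ P ∂ν := by
          nth_rw 2 [← ENNReal.rpow_one C]
          rw [← mul_assoc, ← ENNReal.rpow_add_of_nonneg _ _ (by linarith) zero_le_one,
            sub_add_cancel]
  simp only [eLpNorm_eq_lintegral_rpow_enorm_toReal hp0 hp', enorm_eq_self]
  calc (∫⁻ x, ‖F x‖ₑ ^ P ∂μ) ^ (1 / P) ≤ (C ^ P * ∫⁻ y, f y ^ P ∂ν) ^ (1 / P) := by gcongr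
    _ = C * (∫⁻ y, f y ^ P ∂ν) ^ (1 / P) := by
      rw [ENNReal.mul_rpow_of_nonneg _ _ (by positivity), ← ENNReal.rpow_mul,
        mul_one_div_cancel hP0.ne', ENNReal.rpow_one]

end SchurTest

theorem tendsto_eLpNorm_of_dominated {α ι E : Type*} [MeasurableSpace α] {μ : Measure α}
    [IsFiniteMeasure μ] [NormedAddCommGroup E] {l : Filter ι} [l.IsCountablyGenerated]
    {p : ℝ≥0∞} (hp : p ≠ ⊤) {F : ι → α → E} {C : ℝ≥0∞} (hC : C ≠ ⊤)
    (hF : ∀ᶠ i in l, AEStronglyMeasurable (F i) μ) (hbound : ∀ᶠ i in l, ∀ᵐ x ∂μ, ‖F i x‖ₑ ≤ C)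
    (hlim : ∀ᵐ x ∂μ, Tendsto (fun i => F i x) l (𝓝 0)) :
    Tendsto (fun i => eLpNorm (F i) p μ) l (𝓝 0) := by
  rcases eq_or_ne p 0 with rfl | hp0
  · simpa using tendsto_const_nhds
  have hP : 0 < p.toReal := ENNReal.toReal_pos hp0 hp
  have hint := tendsto_lintegral_filter_of_dominated_convergence' (fun _ => C ^ p.toReal)
    (hF.mono fun _ h => h.enorm.pow_const _) (hbound.mono fun _ h => h.mono fun _ hx => by gcongr)
    (by rw [lintegral_const]
        exact ENNReal.mul_ne_top (ENNReal.rpow_ne_top_of_nonneg hP.le hC) (measure_ne_top μ _))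
    (hlim.mono fun _ hx => (ENNReal.continuous_rpow_const.tendsto _).comp hx.enorm)
  simp only [enorm_zero, ENNReal.zero_rpow_of_pos hP, lintegral_zero] at hint
  have hroot := ((ENNReal.continuous_rpow_const (y := 1 / p.toReal)).tendsto 0).comp hint
  rw [ENNReal.zero_rpow_of_pos (one_div_pos.2 hP)] at hroot
  simpa only [eLpNorm_eq_lintegral_rpow_enorm_toReal hp0 hp, Function.comp_def] using hroot

lemma continuousAt_Gamma_add_one : ContinuousAt (fun s : ℝ => Real.Gamma (s + 1)) 0 := by
  have hΓ : ContinuousAt Real.Gamma (0 + 1) := by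
    refine (Real.differentiableAt_Gamma fun m h => ?_).continuousAt
    linarith [(m.cast_nonneg : (0 : ℝ) ≤ m)]
  exact ContinuousAt.comp (f := fun s : ℝ => s + 1) hΓ (continuous_add_const 1).continuousAt

lemma tendsto_rpow_div_Gamma_add_one {d : ℝ} (hd : 0 < d) :
    Tendsto (fun s : ℝ => d ^ s / Real.Gamma (s + 1)) (𝓝 0) (𝓝 1) := by
  simpa [Real.Gamma_one, Pi.div_def] using
    (Real.continuousAt_const_rpow hd.ne').tendsto.div continuousAt_Gamma_add_one.tendsto (by simp)

lemma tendsto_inv_Gamma_nhdsGT_zero : Tendsto (fun s : ℝ => (Real.Gamma s)⁻¹) (𝓝[>] 0) (𝓝 0) := by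
  have h := tendsto_id.div continuousAt_Gamma_add_one.tendsto (by simp)
  simp only [zero_div] at h
  refine (h.mono_left nhdsWithin_le_nhds).congr' ?_
  filter_upwards [self_mem_nhdsWithin] with s hs
  change s / Real.Gamma (s + 1) = _
  rw [Real.Gamma_add_one (ne_of_gt hs), div_mul_cancel_left₀ (ne_of_gt hs)]

lemma eventually_rpow_div_Gamma_add_one_le_two {d : ℝ} (hd : 0 < d) :
    ∀ᶠ s in 𝓝[>] 0, d ^ s / Real.Gamma (s + 1) ≤ 2 :=
  ((tendsto_rpow_div_Gamma_add_one hd).mono_left nhdsWithin_le_nhds).eventually_le_const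
    (by norm_num)

noncomputable def rlKernel (s r : ℝ) : ℝ :=
  (Ici 0).indicator (fun r => r ^ (s - 1) / Real.Gamma s) r

section Kernel

variable {s : ℝ}

lemma rlKernel_of_neg {r : ℝ} (hr : r < 0) : rlKernel s r = 0 :=
  indicator_of_notMem (not_le.2 hr) _

lemma rlKernel_nonneg (hs : 0 ≤ s) (r : ℝ) : 0 ≤ rlKernel s r :=
  indicator_nonneg (fun _ hr => div_nonneg (Real.rpow_nonneg hr _)
    (Real.Gamma_nonneg_of_nonneg hs)) r

@[fun_prop]
lemma measurable_rlKernel : Measurable (rlKernel s) :=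
  Measurable.indicator (by fun_prop) measurableSet_Ici

lemma intervalIntegrable_rlKernel (hs : 0 < s) (c d : ℝ) :
    IntervalIntegrable (rlKernel s) volume c d := by
  have h := (intervalIntegral.intervalIntegrable_rpow' (a := c) (b := d)
    (by linarith : -1 < s - 1)).div_const (Real.Gamma s)
  rw [intervalIntegrable_iff] at h ⊢
  exact h.indicator measurableSet_Ici

lemma integral_rlKernel (hs : 0 < s) {L : ℝ} (hL : 0 ≤ L) :
    ∫ r in 0..L, rlKernel s r = L ^ s / Real.Gamma (s + 1) := by
  have hfun : EqOn (rlKernel s) (fun r => r ^ (s - 1) / Real.Gamma s) (uIcc 0 L) := by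
    intro r hr
    rw [uIcc_of_le hL] at hr
    exact indicator_of_mem (show r ∈ Ici 0 from hr.1) _
  rw [intervalIntegral.integral_congr hfun, intervalIntegral.integral_div,
    integral_rpow (Or.inl (by linarith)), Real.Gamma_add_one hs.ne']
  simp [Real.zero_rpow hs.ne', div_div]

variable {a b x t : ℝ}

lemma RLint_eq_setIntegral (hax : a ≤ x) (v : ℝ → ℝ) :
    RLint a s v x = ∫ t in Ioc a x, rlKernel s (x - t) * v t := by
  rw [RLint, intervalIntegral.integral_of_le hax, ← integral_const_mul]
  refine setIntegral_congr_fun measurableSet_Ioc fun t ht => ?_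
  rw [rlKernel, indicator_of_mem (show x - t ∈ Ici 0 from sub_nonneg.2 ht.2)]
  ring

lemma integrableOn_rlKernel_sub_left (hs : 0 < s) (a x : ℝ) :
    IntegrableOn (fun t => rlKernel s (x - t)) (Ioc a x) := by
  rcases le_total a x with hax | hxa
  · simpa using ((intervalIntegrable_rlKernel hs (x - a) 0).comp_sub_left x).1
  · simp [Ioc_eq_empty_of_le hxa]

lemma integral_rlKernel_sub_left (hs : 0 < s) (hax : a ≤ x) :
    ∫ t in Ioc a x, rlKernel s (x - t) = (x - a) ^ s / Real.Gamma (s + 1) := by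
  rw [← intervalIntegral.integral_of_le hax, intervalIntegral.integral_comp_sub_left, sub_self,
    integral_rlKernel hs (sub_nonneg.2 hax)]

lemma lintegral_rlKernel_sub_left (hs : 0 < s) (hax : a ≤ x) :
    ∫⁻ t in Ioc a x, ‖rlKernel s (x - t)‖ₑ = ENNReal.ofReal ((x - a) ^ s / Real.Gamma (s + 1)) := by
  rw [← ofReal_integral_norm_eq_lintegral_enorm (integrableOn_rlKernel_sub_left hs a x)]
  simp only [Real.norm_of_nonneg (rlKernel_nonneg hs.le _), integral_rlKernel_sub_left hs hax]

lemma lintegral_rlKernel_sub_right (hs : 0 < s) (htb : t ≤ b) :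
    ∫⁻ x in Ioc t b, ‖rlKernel s (x - t)‖ₑ = ENNReal.ofReal ((b - t) ^ s / Real.Gamma (s + 1)) := by
  have hint : IntegrableOn (fun x => rlKernel s (x - t)) (Ioc t b) := by
    simpa using ((intervalIntegrable_rlKernel hs 0 (b - t)).comp_sub_right t).1
  rw [← ofReal_integral_norm_eq_lintegral_enorm hint]
  simp only [Real.norm_of_nonneg (rlKernel_nonneg hs.le _)]
  rw [← intervalIntegral.integral_of_le htb, intervalIntegral.integral_comp_sub_right, sub_self,
    integral_rlKernel hs (sub_nonneg.2 htb)]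

end Kernel

section Estimates

variable {a b s x t : ℝ}

lemma enorm_RLint_sub_le (hax : a ≤ x) {v w : ℝ → ℝ}
    (hvw : AEStronglyMeasurable (fun t => v t - w t) (volume.restrict (Ioc a x)))
    (hw : IntegrableOn (fun t => rlKernel s (x - t) * w t) (Ioc a x)) :
    ‖RLint a s v x - RLint a s w x‖ₑ ≤ ∫⁻ t in Ioc a x, ‖rlKernel s (x - t)‖ₑ * ‖v t - w t‖ₑ := by
  rw [RLint_eq_setIntegral hax, RLint_eq_setIntegral hax]
  by_cases hvi : IntegrableOn (fun t => rlKernel s (x - t) * v t) (Ioc a x)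
  · rw [← integral_sub hvi hw]
    refine (enorm_integral_le_lintegral_enorm _).trans_eq (lintegral_congr fun t => ?_)
    rw [← mul_sub, enorm_mul]
  -- `∫ rlKernel * v` is then a junk value, but the right-hand side is infinite
  suffices h : ∫⁻ t in Ioc a x, ‖rlKernel s (x - t)‖ₑ * ‖v t - w t‖ₑ = ⊤ by rw [h]; exact le_top
  refine not_ne_iff.1 fun hfin => hvi ?_
  have hdiff : IntegrableOn (fun t => rlKernel s (x - t) * (v t - w t)) (Ioc a x) :=
    ⟨(measurable_rlKernel.comp (measurable_const.sub measurable_id)).aestronglyMeasurable.mul hvw,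
      by simpa [HasFiniteIntegral, enorm_mul] using hfin.lt_top⟩
  exact (hdiff.add hw).congr_fun (fun t _ => by simp only [Pi.add_apply]; ring) measurableSet_Ioc

lemma setLIntegral_Ioo_rlKernel_sub_mul (hx : x ∈ Ioo a b) (f : ℝ → ℝ≥0∞) :
    ∫⁻ t in Ioo a b, ‖rlKernel s (x - t)‖ₑ * f t =
      ∫⁻ t in Ioc a x, ‖rlKernel s (x - t)‖ₑ * f t := by
  have hcausal : (fun t => ‖rlKernel s (x - t)‖ₑ * f t) =
      (Iic x).indicator fun t => ‖rlKernel s (x - t)‖ₑ * f t := by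
    ext t
    by_cases ht : t ≤ x
    · simp [ht]
    · simp [ht, rlKernel_of_neg (sub_neg.2 (not_le.1 ht))]
  have hset : Iic x ∩ Ioo a b = Ioc a x := by
    ext t
    simp only [mem_inter_iff, mem_Iic, mem_Ioo, mem_Ioc]
    exact ⟨fun h => ⟨h.2.1, h.1⟩, fun h => ⟨h.2, h.1, h.2.trans_lt hx.2⟩⟩
  rw [hcausal, lintegral_indicator measurableSet_Iic, Measure.restrict_restrict measurableSet_Iic,
    hset, ← hcausal]

lemma setLIntegral_Ioo_rlKernel_sub_right (ht : t ∈ Ioo a b) :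
    ∫⁻ x in Ioo a b, ‖rlKernel s (x - t)‖ₑ = ∫⁻ x in Ioc t b, ‖rlKernel s (x - t)‖ₑ := by
  have hcausal : (fun x => ‖rlKernel s (x - t)‖ₑ) =
      (Ici t).indicator fun x => ‖rlKernel s (x - t)‖ₑ := by
    ext x
    by_cases hx : t ≤ x
    · simp [hx]
    · simp [hx, rlKernel_of_neg (sub_neg.2 (not_le.1 hx))]
  have hset : Ici t ∩ Ioo a b = Ico t b := by
    ext x
    simp only [mem_inter_iff, mem_Ici, mem_Ioo, mem_Ico]
    exact ⟨fun h => ⟨h.1, h.2.2⟩, fun h => ⟨h.1, ht.1.trans_le h.1, h.2⟩⟩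
  rw [hcausal, lintegral_indicator measurableSet_Ici, Measure.restrict_restrict measurableSet_Ici,
    hset, ← hcausal, Measure.restrict_congr_set Ico_ae_eq_Ioc]

end Estimates

section LpBound

variable {a b s : ℝ}

lemma aestronglyMeasurable_RLint {v : ℝ → ℝ} (hv : Measurable v) :
    AEStronglyMeasurable (RLint a s v) (volume.restrict (Ioo a b)) := by
  have hconv : ∀ x ∈ Ioo a b, RLint a s v x = ∫ t in Ioi a, rlKernel s (x - t) * v t := by
    intro x hx
    rw [RLint_eq_setIntegral hx.1.le]
    refine (setIntegral_eq_of_subset_of_forall_sdiff_eq_zero measurableSet_Ioi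
      Ioc_subset_Ioi_self fun t ht => ?_).symm
    have htx : x < t := not_le.1 fun h => ht.2 ⟨ht.1, h⟩
    rw [rlKernel_of_neg (sub_neg.2 htx), zero_mul]
  have hmeas : StronglyMeasurable fun x => ∫ t in Ioi a, rlKernel s (x - t) * v t :=
    StronglyMeasurable.integral_prod_right' (f := fun q : ℝ × ℝ => rlKernel s (q.1 - q.2) * v q.2)
      (by fun_prop : Measurable _).stronglyMeasurable
  exact hmeas.aestronglyMeasurable.congr
    ((ae_restrict_iff' measurableSet_Ioo).2 (ae_of_all _ fun x hx => (hconv x hx).symm))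

theorem eLpNorm_RLint_sub_RLint_le (hs : 0 < s) {p : ℝ≥0∞} (hp : 1 ≤ p) (hp' : p ≠ ⊤)
    {v w : ℝ → ℝ} (hv : Measurable v) (hw : Continuous w) :
    eLpNorm (fun x => RLint a s v x - RLint a s w x) p (volume.restrict (Ioo a b)) ≤
      ENNReal.ofReal ((b - a) ^ s / Real.Gamma (s + 1)) *
        eLpNorm (fun t => v t - w t) p (volume.restrict (Ioo a b)) := by
  have hmono : ∀ L, 0 ≤ L → L ≤ b - a → ENNReal.ofReal (L ^ s / Real.Gamma (s + 1)) ≤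
      ENNReal.ofReal ((b - a) ^ s / Real.Gamma (s + 1)) := fun L h0 h1 => by gcongr
  rw [← eLpNorm_enorm (fun t => v t - w t)]
  refine eLpNorm_le_of_enorm_le_lintegral_kernel hp hp' (K := fun x t => ‖rlKernel s (x - t)‖ₑ)
    (by fun_prop) (by fun_prop) ?_ ?_ ?_
  · filter_upwards [self_mem_ae_restrict measurableSet_Ioo] with x hx
    have hrow := setLIntegral_Ioo_rlKernel_sub_mul (s := s) hx 1
    simp only [Pi.one_apply, mul_one] at hrow
    rw [hrow, lintegral_rlKernel_sub_left hs hx.1.le]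
    exact hmono _ (by linarith [hx.1]) (by linarith [hx.2])
  · filter_upwards [self_mem_ae_restrict measurableSet_Ioo] with t ht
    rw [setLIntegral_Ioo_rlKernel_sub_right ht, lintegral_rlKernel_sub_right hs ht.2.le]
    exact hmono _ (by linarith [ht.2]) (by linarith [ht.1])
  · filter_upwards [self_mem_ae_restrict measurableSet_Ioo] with x hx
    rw [setLIntegral_Ioo_rlKernel_sub_mul hx]
    exact enorm_RLint_sub_le hx.1.le (hv.sub hw.measurable).aestronglyMeasurable
      ((integrableOn_rlKernel_sub_left hs a x).mul_continuousOn_of_subset hw.continuousOn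
        measurableSet_Ioc isCompact_Icc Ioc_subset_Icc_self)

end LpBound

theorem tendsto_RLint_nhdsGT_zero {a x : ℝ} (hax : a < x) {g : ℝ → ℝ}
    (hgi : IntegrableOn g (Ioc a x)) (hgx : ContinuousWithinAt g (Ioc a x) x) :
    Tendsto (fun s => RLint a s g x) (𝓝[>] 0) (𝓝 (g x)) := by
  -- the kernels `rlKernel s (x - ·)` on `(a, x]` form an approximate identity at `x`
  simp_rw [RLint_eq_setIntegral hax.le, ← smul_eq_mul]
  refine tendsto_setIntegral_peak_smul_of_integrableOn_of_tendsto measurableSet_Ioc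
    measurableSet_Ioc Subset.rfl self_mem_nhdsWithin measure_Ioc_lt_top.ne ?_ ?_ ?_
    (Eventually.of_forall fun s => (by fun_prop : Measurable _).aestronglyMeasurable) hgi hgx
  · filter_upwards [self_mem_nhdsWithin] with s hs t _ using rlKernel_nonneg (le_of_lt hs) _
  · intro u hu hxu
    obtain ⟨δ, hδ, hball⟩ := Metric.isOpen_iff.1 hu x hxu
    have hsup : Tendsto (fun s : ℝ => δ ^ (s - 1) * (Real.Gamma s)⁻¹) (𝓝[>] 0) (𝓝 0) := by
      simpa using (((Real.continuousAt_const_rpow hδ.ne').comp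
        (_root_.continuous_sub_right 1).continuousAt).tendsto.mono_left nhdsWithin_le_nhds).mul
          tendsto_inv_Gamma_nhdsGT_zero
    refine Metric.tendstoUniformlyOn_iff.2 fun ε hε => ?_
    filter_upwards [Ioo_mem_nhdsGT one_pos, hsup.eventually_lt_const hε] with s hs hsε t ht
    have hδt : δ ≤ x - t := by
      by_contra! h
      exact ht.2 (hball (by rw [Metric.mem_ball, Real.dist_eq, abs_sub_comm,
        abs_of_nonneg (sub_nonneg.2 ht.1.2)]; exact h))
    rw [Pi.zero_apply, dist_zero_left, Real.norm_of_nonneg (rlKernel_nonneg hs.1.le _),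
      rlKernel, indicator_of_mem (show x - t ∈ Ici 0 from sub_nonneg.2 ht.1.2), div_eq_mul_inv]
    refine lt_of_le_of_lt (mul_le_mul_of_nonneg_right ?_
      (inv_nonneg.2 (Real.Gamma_pos_of_pos hs.1).le)) hsε
    exact Real.rpow_le_rpow_of_nonpos hδ hδt (by linarith [hs.2])
  · refine ((tendsto_rpow_div_Gamma_add_one (sub_pos.2 hax)).mono_left nhdsWithin_le_nhds).congr' ?_
    filter_upwards [self_mem_nhdsWithin] with s hs
    exact (integral_rlKernel_sub_left hs hax.le).symm

section Convergence

variable {a b s : ℝ}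

lemma norm_RLint_le (hs : 0 < s) {x : ℝ} (hax : a ≤ x) {v : ℝ → ℝ} {M : ℝ}
    (hM : ∀ t ∈ Ioc a x, ‖v t‖ ≤ M) :
    ‖RLint a s v x‖ ≤ M * ((x - a) ^ s / Real.Gamma (s + 1)) := by
  rw [RLint_eq_setIntegral hax, ← integral_rlKernel_sub_left hs hax, ← integral_const_mul]
  refine norm_integral_le_of_norm_le ((integrableOn_rlKernel_sub_left hs a x).const_mul M) ?_
  filter_upwards [self_mem_ae_restrict measurableSet_Ioc] with t ht
  rw [norm_mul, Real.norm_of_nonneg (rlKernel_nonneg hs.le _), mul_comm]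
  exact mul_le_mul_of_nonneg_right (hM t ht) (rlKernel_nonneg hs.le _)

theorem tendsto_eLpNorm_RLint_sub_of_continuous {p : ℝ≥0∞} (hp : p ≠ ⊤) {g : ℝ → ℝ}
    (hg : Continuous g) :
    Tendsto (fun s => eLpNorm (fun x => RLint a s g x - g x) p (volume.restrict (Ioo a b)))
      (𝓝[>] 0) (𝓝 0) := by
  rcases le_or_gt b a with hba | hab
  · simp [Ioo_eq_empty_of_le hba]
  obtain ⟨M, hM⟩ := (isCompact_Icc (a := a) (b := b)).exists_bound_of_continuousOn hg.continuousOn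
  refine tendsto_eLpNorm_of_dominated hp (C := ENNReal.ofReal (3 * M)) ENNReal.ofReal_ne_top
    (Eventually.of_forall fun s =>
      ((aestronglyMeasurable_RLint hg.measurable).sub hg.aestronglyMeasurable)) ?_ ?_
  · filter_upwards [self_mem_nhdsWithin, eventually_rpow_div_Gamma_add_one_le_two (sub_pos.2 hab)]
      with s hs hcoef
    filter_upwards [self_mem_ae_restrict measurableSet_Ioo] with x hx
    have hMx : ∀ t ∈ Ioc a x, ‖g t‖ ≤ M := fun t ht => hM t ⟨ht.1.le, ht.2.trans hx.2.le⟩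
    have hxb : (x - a) ^ s / Real.Gamma (s + 1) ≤ 2 :=
      (div_le_div_of_nonneg_right
        (Real.rpow_le_rpow (by linarith [hx.1]) (by linarith [hx.2]) hs.le)
        (Real.Gamma_pos_of_pos (by linarith [hs.out])).le).trans hcoef
    have hRL : ‖RLint a s g x‖ ≤ M * 2 := (norm_RLint_le hs hx.1.le hMx).trans <|
      mul_le_mul_of_nonneg_left hxb ((norm_nonneg _).trans (hMx x ⟨hx.1, le_rfl⟩))
    rw [← ofReal_norm]
    exact ENNReal.ofReal_le_ofReal <| (norm_sub_le _ _).trans <| by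
      linarith [hMx x ⟨hx.1, le_rfl⟩]
  · filter_upwards [self_mem_ae_restrict measurableSet_Ioo] with x hx
    simpa using (tendsto_RLint_nhdsGT_zero hx.1 hg.integrableOn_Ioc
      hg.continuousWithinAt).sub_const (g x)

end Convergence

section Approximation

variable {a b s : ℝ}

lemma eLpNorm_RLint_sub_self_le (hs : 0 < s) {p : ℝ≥0∞} (hp : 1 ≤ p) (hp' : p ≠ ⊤)
    {v g : ℝ → ℝ} (hv : Measurable v) (hg : Continuous g) :
    eLpNorm (fun x => RLint a s v x - v x) p (volume.restrict (Ioo a b)) ≤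
      (ENNReal.ofReal ((b - a) ^ s / Real.Gamma (s + 1)) + 1) *
          eLpNorm (fun t => v t - g t) p (volume.restrict (Ioo a b)) +
        eLpNorm (fun x => RLint a s g x - g x) p (volume.restrict (Ioo a b)) := by
  have hRv := aestronglyMeasurable_RLint (a := a) (b := b) (s := s) hv
  have hRg := aestronglyMeasurable_RLint (a := a) (b := b) (s := s) hg.measurable
  have hsplit : (fun x => RLint a s v x - v x) =
      ((fun x => RLint a s v x - RLint a s g x) + fun x => RLint a s g x - g x) -
        fun t => v t - g t := by
    ext x
    simp only [Pi.add_apply, Pi.sub_apply]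
    ring
  rw [hsplit]
  calc _ ≤ eLpNorm (fun x => RLint a s v x - RLint a s g x) p (volume.restrict (Ioo a b)) +
          eLpNorm (fun x => RLint a s g x - g x) p (volume.restrict (Ioo a b)) +
          eLpNorm (fun t => v t - g t) p (volume.restrict (Ioo a b)) := by
        refine (eLpNorm_sub_le ((hRv.sub hRg).add (hRg.sub hg.aestronglyMeasurable))
          (hv.sub hg.measurable).aestronglyMeasurable hp).trans ?_
        exact add_le_add_left (eLpNorm_add_le (hRv.sub hRg) (hRg.sub hg.aestronglyMeasurable) hp) _
    _ ≤ ENNReal.ofReal ((b - a) ^ s / Real.Gamma (s + 1)) *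
            eLpNorm (fun t => v t - g t) p (volume.restrict (Ioo a b)) +
          eLpNorm (fun x => RLint a s g x - g x) p (volume.restrict (Ioo a b)) +
          eLpNorm (fun t => v t - g t) p (volume.restrict (Ioo a b)) := by
        gcongr
        exact eLpNorm_RLint_sub_RLint_le hs hp hp' hv hg
    _ = _ := by ring

lemma RLint_congr_ae {x : ℝ} (hax : a ≤ x) {v w : ℝ → ℝ}
    (h : v =ᵐ[volume.restrict (Ioc a x)] w) : RLint a s v x = RLint a s w x := by
  rw [RLint_eq_setIntegral hax, RLint_eq_setIntegral hax]
  exact integral_congr_ae (h.mono fun t ht => by simp [ht])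

lemma eLpNorm_RLint_sub_self_congr_ae {p : ℝ≥0∞} {v w : ℝ → ℝ}
    (h : v =ᵐ[volume.restrict (Ioo a b)] w) :
    eLpNorm (fun x => RLint a s v x - v x) p (volume.restrict (Ioo a b)) =
      eLpNorm (fun x => RLint a s w x - w x) p (volume.restrict (Ioo a b)) := by
  refine eLpNorm_congr_ae ?_
  filter_upwards [self_mem_ae_restrict measurableSet_Ioo, h] with x hx hvw
  rw [hvw, RLint_congr_ae hx.1.le (ae_restrict_of_ae_restrict_of_subset
    (Ioc_subset_Ioo_right hx.2) h)]

end Approximation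

/-- `‖I_{a+}^s[u] − u‖_{L^p(a,b)} → 0` as `s → 0+`. -/
theorem rl_fracint_tendsto_id (a b : ℝ) (hab : a < b) (p : ℝ≥0∞) (hp : 1 ≤ p) (hp' : p ≠ ⊤)
    (u : ℝ → ℝ) (hu : MemLp u p (volume.restrict (Set.Ioo a b))) :
    Filter.Tendsto
      (fun s : ℝ => eLpNorm (fun x => RLint a s u x - u x) p (volume.restrict (Set.Ioo a b)))
      (nhdsWithin 0 (Set.Ioi 0)) (nhds 0) := by
  obtain ⟨v, hv, huv⟩ := hu.aestronglyMeasurable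
  simp_rw [eLpNorm_RLint_sub_self_congr_ae huv]
  refine ENNReal.tendsto_nhds_zero.2 fun ε hε => ?_
  have hε4 : ε / 4 ≠ 0 := (ENNReal.div_pos hε.ne' (by norm_num)).ne'
  obtain ⟨g, -, hvg, hg, -⟩ := (hu.ae_eq huv).exists_hasCompactSupport_eLpNorm_sub_le hp' hε4
  filter_upwards [self_mem_nhdsWithin, eventually_rpow_div_Gamma_add_one_le_two (sub_pos.2 hab),
    ENNReal.tendsto_nhds_zero.1 (tendsto_eLpNorm_RLint_sub_of_continuous hp' hg) (ε / 4)
      (pos_iff_ne_zero.2 hε4)] with s hs hcoef hgs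
  calc _ ≤ _ := eLpNorm_RLint_sub_self_le hs hp hp' hv.measurable hg
    _ ≤ (2 + 1) * (ε / 4) + ε / 4 := by
      gcongr
      · simpa using ENNReal.ofReal_le_ofReal hcoef
      · exact hvg
    _ = ε := by
      rw [show (2 + 1 : ℝ≥0∞) * (ε / 4) + ε / 4 = 4 * (ε / 4) by ring]
      exact ENNReal.mul_div_cancel (by norm_num) (by norm_num)
end

section
/- Let a < b be real numbers, s ∈ (0,1) and p ∈ (1/s, ∞). Then for every u ∈ L^p(a,b) the integral defining I_{a+}^s[u](x) converges absolutely for every x ∈ [a,b], and there exists a constant C > 0, depending only on a, b, s and p, such that |I_{a+}^s[u](x) − I_{a+}^s[u](y)| ≤ C ‖u‖_{L^p(a,b)} |x−y|^{s−1/p} for all x, y ∈ [a,b]; in particular I_{a+}^s[u] is Hölder continuous of exponent s − 1/p on [a,b]. -/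
open MeasureTheory Set Filter ENNReal

/-!
For `y ≤ x` the difference `I(x) - I(y)` splits into the integral of `u` against the kernel
`(x - t)^(s-1)` over `(y, x)` and against the kernel difference `(y - t)^(s-1) - (x - t)^(s-1)`
over `(a, y)`. Hölder's inequality with the conjugate exponent `q` bounds each piece by
`‖u‖_p` times the `L^q` norm of the kernel piece. These norms are finite exactly because
`p > 1/s` means `(s - 1) q > -1`; the first is computed explicitly, and the second is reduced to
the first by `(A - B)^q ≤ A^q - B^q`, so both are at most
`((x - y)^((s-1)q+1) / ((s-1)q+1))^(1/q)`, a multiple of `(x - y)^(s - 1/p)`.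
-/

section Holder

variable {α E : Type*} [MeasurableSpace α] [NormedAddCommGroup E] {μ : Measure α} {p q : ℝ}

theorem MeasureTheory.MemLp.toReal_eLpNorm_eq_integral_norm_rpow {f : α → E} (hp : 0 < p)
    (hf : MemLp f (.ofReal p) μ) :
    (eLpNorm f (.ofReal p) μ).toReal = (∫ t, ‖f t‖ ^ p ∂μ) ^ (1 / p) := by
  rw [hf.eLpNorm_eq_integral_rpow_norm (by simpa) ofReal_ne_top, toReal_ofReal (by positivity),
    toReal_ofReal hp.le, one_div]

theorem abs_integral_mul_le_toReal_eLpNorm_mul (hpq : p.HolderConjugate q) {f g : α → ℝ}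
    (hf : MemLp f (.ofReal p) μ) (hg : MemLp g (.ofReal q) μ) :
    |∫ t, f t * g t ∂μ| ≤
      (eLpNorm f (.ofReal p) μ).toReal * (eLpNorm g (.ofReal q) μ).toReal := by
  rw [hf.toReal_eLpNorm_eq_integral_norm_rpow hpq.pos,
    hg.toReal_eLpNorm_eq_integral_norm_rpow hpq.symm.pos]
  calc |∫ t, f t * g t ∂μ| ≤ ∫ t, ‖f t‖ * ‖g t‖ ∂μ := by
        simpa only [Real.norm_eq_abs, abs_mul] using norm_integral_le_integral_norm (μ := μ)
          (fun t => f t * g t)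
    _ ≤ _ := integral_mul_norm_le_Lp_mul_Lq hpq hf hg

theorem memLp_of_integrable_rpow {g : α → ℝ} (hq : 0 < q) (hgm : AEStronglyMeasurable g μ)
    (hg0 : 0 ≤ᵐ[μ] g) (hg : Integrable (fun t => g t ^ q) μ) : MemLp g (.ofReal q) μ := by
  refine (integrable_norm_rpow_iff hgm (by simpa) ofReal_ne_top).1 (hg.congr ?_)
  filter_upwards [hg0] with t ht
  rw [Real.norm_of_nonneg ht, toReal_ofReal hq.le]

theorem toReal_eLpNorm_restrict_le_of_subset {f : α → E} {P : ℝ≥0∞} {s t : Set α}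
    (hst : s ⊆ t) (hf : MemLp f P (μ.restrict t)) :
    (eLpNorm f P (μ.restrict s)).toReal ≤ (eLpNorm f P (μ.restrict t)).toReal :=
  toReal_mono hf.eLpNorm_ne_top (eLpNorm_mono_measure f (Measure.restrict_mono hst le_rfl))

theorem MeasureTheory.MemLp.restrict_of_subset {f : α → E} {P : ℝ≥0∞} {s t : Set α}
    (hst : s ⊆ t) (hf : MemLp f P (μ.restrict t)) : MemLp f P (μ.restrict s) :=
  hf.mono_measure (Measure.restrict_mono hst le_rfl)

end Holder

section Interval

variable {p q c d : ℝ} {u g : ℝ → ℝ}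

theorem intervalIntegrable_mul_of_memLp (hpq : p.HolderConjugate q) (hcd : c ≤ d)
    (hu : MemLp u (.ofReal p) (volume.restrict (Ioo c d)))
    (hg : MemLp g (.ofReal q) (volume.restrict (Ioo c d))) :
    IntervalIntegrable (fun t => u t * g t) volume c d := by
  have := hpq.ennrealOfReal
  rw [intervalIntegrable_iff_integrableOn_Ioc_of_le hcd, integrableOn_Ioc_iff_integrableOn_Ioo]
  exact hu.integrable_mul hg

theorem abs_intervalIntegral_mul_le (hpq : p.HolderConjugate q) (hcd : c ≤ d)
    (hu : MemLp u (.ofReal p) (volume.restrict (Ioo c d)))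
    (hg : MemLp g (.ofReal q) (volume.restrict (Ioo c d))) :
    |∫ t in c..d, u t * g t| ≤ (eLpNorm u (.ofReal p) (volume.restrict (Ioo c d))).toReal *
      (eLpNorm g (.ofReal q) (volume.restrict (Ioo c d))).toReal := by
  rw [intervalIntegral.integral_of_le hcd, integral_Ioc_eq_integral_Ioo]
  exact abs_integral_mul_le_toReal_eLpNorm_mul hpq hu hg

end Interval

section Kernel

variable {β q r a c x y : ℝ}

theorem Real.sub_rpow_le_rpow_sub_rpow {A B : ℝ} (hB : 0 ≤ B) (hBA : B ≤ A) (hq : 1 ≤ q) :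
    (A - B) ^ q ≤ A ^ q - B ^ q := by
  have h := Real.add_rpow_le_rpow_add (sub_nonneg.2 hBA) hB hq
  rw [sub_add_cancel] at h
  linarith

theorem intervalIntegrable_sub_rpow (hr : -1 < r) (x c d : ℝ) :
    IntervalIntegrable (fun t => (x - t) ^ r) volume c d := by
  simpa using
    (intervalIntegral.intervalIntegrable_rpow' hr (a := x - c) (b := x - d)).comp_sub_left x

theorem integral_sub_rpow (hr : -1 < r) (x c d : ℝ) :
    ∫ t in c..d, (x - t) ^ r = ((x - c) ^ (r + 1) - (x - d) ^ (r + 1)) / (r + 1) := by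
  rw [intervalIntegral.integral_comp_sub_left (fun v => v ^ r) x, integral_rpow (Or.inl hr)]

theorem setIntegral_Ioo_sub_rpow (hr : -1 < r) (hcd : c ≤ d) (x : ℝ) :
    ∫ t in Ioo c d, (x - t) ^ r = ((x - c) ^ (r + 1) - (x - d) ^ (r + 1)) / (r + 1) := by
  rw [← integral_Ioc_eq_integral_Ioo, ← intervalIntegral.integral_of_le hcd,
    integral_sub_rpow hr]

theorem sub_rpow_rpow_of_mem_Ioo {t : ℝ} (ht : t ∈ Ioo c x) :
    ((x - t) ^ β) ^ q = (x - t) ^ (β * q) :=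
  (Real.rpow_mul (sub_nonneg.2 ht.2.le) β q).symm

theorem memLp_sub_rpow (hq : 0 < q) (hr : -1 < β * q) (hcx : c ≤ x) :
    MemLp (fun t => (x - t) ^ β) (.ofReal q) (volume.restrict (Ioo c x)) := by
  refine memLp_of_integrable_rpow hq
    ((measurable_const.sub measurable_id).pow_const β).aestronglyMeasurable
    (ae_restrict_of_forall_mem measurableSet_Ioo fun t ht =>
      Real.rpow_nonneg (by linarith [ht.2]) β) ?_
  have h := intervalIntegrable_sub_rpow hr x c x
  rw [intervalIntegrable_iff_integrableOn_Ioo_of_le hcx] at h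
  exact h.congr_fun (fun t ht => (sub_rpow_rpow_of_mem_Ioo ht).symm) measurableSet_Ioo

theorem toReal_eLpNorm_sub_rpow (hq : 0 < q) (hr : -1 < β * q) (hcx : c ≤ x) :
    (eLpNorm (fun t => (x - t) ^ β) (.ofReal q) (volume.restrict (Ioo c x))).toReal =
      ((x - c) ^ (β * q + 1) / (β * q + 1)) ^ (1 / q) := by
  rw [(memLp_sub_rpow hq hr hcx).toReal_eLpNorm_eq_integral_norm_rpow hq]
  have hnorm : ∫ t in Ioo c x, ‖(x - t) ^ β‖ ^ q = ∫ t in Ioo c x, (x - t) ^ (β * q) :=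
    setIntegral_congr_fun measurableSet_Ioo fun t ht => by
      rw [Real.norm_of_nonneg (Real.rpow_nonneg (by linarith [ht.2]) β),
        sub_rpow_rpow_of_mem_Ioo ht]
  rw [hnorm, setIntegral_Ioo_sub_rpow hr hcx, sub_self, Real.zero_rpow (by linarith), sub_zero]

theorem memLp_rpow_sub_sub_rpow (hq : 0 < q) (hr : -1 < β * q) (hay : a ≤ y) (hyx : y ≤ x) :
    MemLp (fun t => (y - t) ^ β - (x - t) ^ β) (.ofReal q) (volume.restrict (Ioo a y)) :=
  (memLp_sub_rpow hq hr hay).sub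
    ((memLp_sub_rpow hq hr (hay.trans hyx)).restrict_of_subset (Ioo_subset_Ioo_right hyx))

theorem Real.rpow_sub_rpow_rpow_le {A B : ℝ} (hA : 0 < A) (hAB : A ≤ B) (hβ : β ≤ 0)
    (hq : 1 ≤ q) : (A ^ β - B ^ β) ^ q ≤ A ^ (β * q) - B ^ (β * q) := by
  have hmono : B ^ β ≤ A ^ β := Real.rpow_le_rpow_of_nonpos hA hAB hβ
  rw [Real.rpow_mul hA.le, Real.rpow_mul (hA.le.trans hAB)]
  exact Real.sub_rpow_le_rpow_sub_rpow (Real.rpow_nonneg (hA.le.trans hAB) β) hmono hq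

theorem setIntegral_Ioo_sub_rpow_sub_sub_rpow_le (hr : -1 < r) (hay : a ≤ y) (hyx : y ≤ x) :
    ∫ t in Ioo a y, ((y - t) ^ r - (x - t) ^ r) ≤ (x - y) ^ (r + 1) / (r + 1) := by
  have hgrow : (y - a) ^ (r + 1) ≤ (x - a) ^ (r + 1) :=
    Real.rpow_le_rpow (by linarith) (by linarith) (by linarith)
  rw [← integral_Ioc_eq_integral_Ioo, ← intervalIntegral.integral_of_le hay,
    intervalIntegral.integral_sub (intervalIntegrable_sub_rpow hr y a y)
      (intervalIntegrable_sub_rpow hr x a y),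
    integral_sub_rpow hr, integral_sub_rpow hr, sub_self, Real.zero_rpow (by linarith), sub_zero,
    div_sub_div_same]
  exact div_le_div_of_nonneg_right (by linarith) (by linarith)

theorem toReal_eLpNorm_rpow_sub_sub_rpow_le (hβ : β ≤ 0) (hq : 1 ≤ q) (hr : -1 < β * q)
    (hay : a ≤ y) (hyx : y ≤ x) :
    (eLpNorm (fun t => (y - t) ^ β - (x - t) ^ β) (.ofReal q)
        (volume.restrict (Ioo a y))).toReal ≤
      ((x - y) ^ (β * q + 1) / (β * q + 1)) ^ (1 / q) := by
  have hq0 : 0 < q := by linarith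
  have hmem := memLp_rpow_sub_sub_rpow hq0 hr hay hyx
  have hpointwise : ∀ t ∈ Ioo a y,
      ‖(y - t) ^ β - (x - t) ^ β‖ ^ q ≤ (y - t) ^ (β * q) - (x - t) ^ (β * q) := by
    intro t ht
    have hyt : 0 < y - t := by linarith [ht.2]
    rw [Real.norm_of_nonneg
      (sub_nonneg.2 (Real.rpow_le_rpow_of_nonpos hyt (by linarith) hβ))]
    exact Real.rpow_sub_rpow_rpow_le hyt (by linarith) hβ hq
  have hdiff : IntegrableOn (fun t => (y - t) ^ (β * q) - (x - t) ^ (β * q)) (Ioo a y) :=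
    (intervalIntegrable_iff_integrableOn_Ioo_of_le hay).1
      ((intervalIntegrable_sub_rpow hr y a y).sub (intervalIntegrable_sub_rpow hr x a y))
  rw [hmem.toReal_eLpNorm_eq_integral_norm_rpow hq0]
  refine Real.rpow_le_rpow (integral_nonneg fun t => by positivity) ?_ (by positivity)
  calc ∫ t in Ioo a y, ‖(y - t) ^ β - (x - t) ^ β‖ ^ q
      ≤ ∫ t in Ioo a y, ((y - t) ^ (β * q) - (x - t) ^ (β * q)) :=
        setIntegral_mono_on
          (by simpa [toReal_ofReal hq0.le, IntegrableOn] using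
            hmem.integrable_norm_rpow (by simpa) ofReal_ne_top)
          hdiff measurableSet_Ioo hpointwise
    _ ≤ (x - y) ^ (β * q + 1) / (β * q + 1) :=
        setIntegral_Ioo_sub_rpow_sub_sub_rpow_le hr hay hyx

end Kernel

section FractionalIntegral

variable {a b s β p q x y : ℝ} {u : ℝ → ℝ}

theorem Real.HolderConjugate.sub_one_mul_add_one (hpq : p.HolderConjugate q) (s : ℝ) :
    (s - 1) * q + 1 = q * (s - 1 / p) := by
  have h := hpq.inv_add_inv_eq_one
  have hp := hpq.ne_zero
  have hq := hpq.symm.ne_zero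
  field_simp at h ⊢
  linarith

theorem Real.HolderConjugate.neg_one_lt_sub_one_mul (hpq : p.HolderConjugate q) (hps : 1 / p < s) :
    -1 < (s - 1) * q := by
  have := mul_pos hpq.symm.pos (sub_pos.2 hps)
  linarith [hpq.sub_one_mul_add_one s]

theorem intervalIntegrable_mul_sub_rpow (hpq : p.HolderConjugate q) (hr : -1 < β * q)
    (hu : MemLp u (.ofReal p) (volume.restrict (Ioo a b))) (hax : a ≤ x) (hxb : x ≤ b) :
    IntervalIntegrable (fun t => u t * (x - t) ^ β) volume a x :=
  intervalIntegrable_mul_of_memLp hpq hax (hu.restrict_of_subset (Ioo_subset_Ioo_right hxb))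
    (memLp_sub_rpow hpq.symm.pos hr hax)

theorem abs_integral_mul_sub_rpow_sub_le (hpq : p.HolderConjugate q) (hβ : β ≤ 0)
    (hr : -1 < β * q) (hu : MemLp u (.ofReal p) (volume.restrict (Ioo a b)))
    (hay : a ≤ y) (hyx : y ≤ x) (hxb : x ≤ b) :
    |(∫ t in a..x, u t * (x - t) ^ β) - ∫ t in a..y, u t * (y - t) ^ β| ≤
      2 * (eLpNorm u (.ofReal p) (volume.restrict (Ioo a b))).toReal *
        ((x - y) ^ (β * q + 1) / (β * q + 1)) ^ (1 / q) := by
  have hq := hpq.symm.pos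
  set N := (eLpNorm u (.ofReal p) (volume.restrict (Ioo a b))).toReal
  set D := ((x - y) ^ (β * q + 1) / (β * q + 1)) ^ (1 / q)
  have hIx := intervalIntegrable_mul_sub_rpow hpq hr hu (hay.trans hyx) hxb
  have hIxy : IntervalIntegrable (fun t => u t * (x - t) ^ β) volume a y :=
    hIx.mono_set (uIcc_subset_uIcc left_mem_uIcc (mem_uIcc_of_le hay hyx))
  have hIyx : IntervalIntegrable (fun t => u t * (x - t) ^ β) volume y x :=
    hIx.mono_set (uIcc_subset_uIcc (mem_uIcc_of_le hay hyx) right_mem_uIcc)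
  have hIy := intervalIntegrable_mul_sub_rpow hpq hr hu hay (hyx.trans hxb)
  have hsplit : (∫ t in a..x, u t * (x - t) ^ β) - ∫ t in a..y, u t * (y - t) ^ β =
      (∫ t in y..x, u t * (x - t) ^ β) - ∫ t in a..y, u t * ((y - t) ^ β - (x - t) ^ β) := by
    simp_rw [mul_sub]
    rw [intervalIntegral.integral_sub hIy hIxy,
      ← intervalIntegral.integral_add_adjacent_intervals hIxy hIyx]
    ring
  have hnear : |∫ t in y..x, u t * (x - t) ^ β| ≤ N * D := by
    have hsub : Ioo y x ⊆ Ioo a b := Ioo_subset_Ioo hay hxb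
    calc _ ≤ (eLpNorm u (.ofReal p) (volume.restrict (Ioo y x))).toReal *
          (eLpNorm (fun t => (x - t) ^ β) (.ofReal q) (volume.restrict (Ioo y x))).toReal :=
          abs_intervalIntegral_mul_le hpq hyx (hu.restrict_of_subset hsub)
            (memLp_sub_rpow hq hr hyx)
      _ ≤ N * (eLpNorm (fun t => (x - t) ^ β) (.ofReal q) (volume.restrict (Ioo y x))).toReal :=
          mul_le_mul_of_nonneg_right (toReal_eLpNorm_restrict_le_of_subset hsub hu) toReal_nonneg
      _ = N * D := by rw [toReal_eLpNorm_sub_rpow hq hr hyx]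
  have hfar : |∫ t in a..y, u t * ((y - t) ^ β - (x - t) ^ β)| ≤ N * D := by
    have hsub : Ioo a y ⊆ Ioo a b := Ioo_subset_Ioo_right (hyx.trans hxb)
    refine (abs_intervalIntegral_mul_le hpq hay (hu.restrict_of_subset hsub)
      (memLp_rpow_sub_sub_rpow hq hr hay hyx)).trans ?_
    exact mul_le_mul (toReal_eLpNorm_restrict_le_of_subset hsub hu)
      (toReal_eLpNorm_rpow_sub_sub_rpow_le hβ hpq.symm.lt.le hr hay hyx) toReal_nonneg
      toReal_nonneg
  calc _ ≤ N * D + N * D := hsplit ▸ (abs_sub _ _).trans (add_le_add hnear hfar)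
    _ = 2 * N * D := by ring

theorem abs_RLint_sub_RLint_le (hpq : p.HolderConjugate q) (hs : s ≤ 1) (hps : 1 / p < s)
    (hu : MemLp u (.ofReal p) (volume.restrict (Ioo a b))) (hay : a ≤ y) (hyx : y ≤ x)
    (hxb : x ≤ b) :
    |RLint a s u x - RLint a s u y| ≤ 2 / (Real.Gamma s * ((s - 1) * q + 1) ^ (1 / q)) *
      (eLpNorm u (.ofReal p) (volume.restrict (Ioo a b))).toReal * (x - y) ^ (s - 1 / p) := by
  have hq := hpq.symm.pos
  have hr := hpq.neg_one_lt_sub_one_mul hps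
  have hΓ := Real.Gamma_pos_of_pos ((one_div_pos.2 hpq.pos).trans hps)
  have hexp : ((x - y) ^ ((s - 1) * q + 1) / ((s - 1) * q + 1)) ^ (1 / q) =
      (x - y) ^ (s - 1 / p) / ((s - 1) * q + 1) ^ (1 / q) := by
    rw [Real.div_rpow (Real.rpow_nonneg (by linarith) _) (by linarith),
      ← Real.rpow_mul (by linarith), hpq.sub_one_mul_add_one s]
    field_simp
  rw [RLint, RLint, ← mul_sub, abs_mul, abs_of_pos (inv_pos.2 hΓ)]
  calc _ ≤ (Real.Gamma s)⁻¹ * (2 * (eLpNorm u (.ofReal p) (volume.restrict (Ioo a b))).toReal *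
        ((x - y) ^ ((s - 1) * q + 1) / ((s - 1) * q + 1)) ^ (1 / q)) :=
        mul_le_mul_of_nonneg_left
          (abs_integral_mul_sub_rpow_sub_le hpq (by linarith) hr hu hay hyx hxb) (by positivity)
    _ = _ := by
        rw [hexp]
        field_simp

end FractionalIntegral

theorem rl_fracint_holder_of_Lp_general (a b s p : ℝ) (hs : s ∈ Set.Ioo (0:ℝ) 1)
    (hp : 1 / s < p) :
    ∃ C > (0:ℝ), ∀ u : ℝ → ℝ,
      MemLp u (ENNReal.ofReal p) (volume.restrict (Set.Ioo a b)) →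
        (∀ x ∈ Set.Icc a b,
          IntervalIntegrable (fun t => u t * (x - t) ^ (s - 1)) volume a x) ∧
        (∀ x ∈ Set.Icc a b, ∀ y ∈ Set.Icc a b,
          |RLint a s u x - RLint a s u y| ≤
            C * (eLpNorm u (ENNReal.ofReal p) (volume.restrict (Set.Ioo a b))).toReal *
              |x - y| ^ (s - 1 / p)) := by
  obtain ⟨hs0, hs1⟩ := hs
  have hp1 : 1 < p := (one_lt_one_div hs0 hs1).trans hp
  obtain ⟨q, hpq⟩ : ∃ q, p.HolderConjugate q := ⟨_, .conjExponent hp1⟩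
  have hps : 1 / p < s := (one_div_lt hs0 (by linarith)).1 hp
  have hr := hpq.neg_one_lt_sub_one_mul hps
  refine ⟨2 / (Real.Gamma s * ((s - 1) * q + 1) ^ (1 / q)), ?_, fun u hu =>
    ⟨fun x hx => intervalIntegrable_mul_sub_rpow hpq hr hu hx.1 hx.2, fun x hx y hy => ?_⟩⟩
  · have := Real.Gamma_pos_of_pos hs0
    have : 0 < (s - 1) * q + 1 := by linarith
    positivity
  rcases le_total y x with hyx | hxy
  · rw [abs_of_nonneg (sub_nonneg.2 hyx)]
    exact abs_RLint_sub_RLint_le hpq hs1.le hps hu hy.1 hyx hx.2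
  · rw [abs_sub_comm, abs_sub_comm x, abs_of_nonneg (sub_nonneg.2 hxy)]
    exact abs_RLint_sub_RLint_le hpq hs1.le hps hu hx.1 hxy hy.2

/-- for `p > 1/s`, the fractional integral maps `L^p(a,b)` into the Hölder
class of exponent `s - 1/p`, with a constant depending only on `a, b, s, p`. -/
theorem rl_fracint_holder_of_Lp (a b s p : ℝ) (hab : a < b) (hs : s ∈ Set.Ioo (0:ℝ) 1)
    (hp : 1 / s < p) :
    ∃ C > (0:ℝ), ∀ u : ℝ → ℝ,
      MemLp u (ENNReal.ofReal p) (volume.restrict (Set.Ioo a b)) →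
        (∀ x ∈ Set.Icc a b,
          IntervalIntegrable (fun t => u t * (x - t) ^ (s - 1)) volume a x) ∧
        (∀ x ∈ Set.Icc a b, ∀ y ∈ Set.Icc a b,
          |RLint a s u x - RLint a s u y| ≤
            C * (eLpNorm u (ENNReal.ofReal p) (volume.restrict (Set.Ioo a b))).toReal *
              |x - y| ^ (s - 1 / p)) :=
  rl_fracint_holder_of_Lp_general a b s p hs hp
end

section
/- Let a < b be real numbers and s ∈ (0,1). Define W^{s,1}(a,b) as the set of u ∈ L^1(a,b) for which there exist c ∈ ℝ and g ∈ L^1(a,b) with I_{a+}^{1−s}[u](x) = c + ∫_a^x g(t) dt for almost every x ∈ (a,b), and for such u set ‖u‖_{W^{s,1}} := ‖u‖_{L^1(a,b)} + ‖I_{a+}^{1−s}[u]‖_{L^1(a,b)} + ‖g‖_{L^1(a,b)} (g is the weak derivative of I_{a+}^{1−s}[u] and is uniquely determined a.e.). Then W^{s,1}(a,b) is complete: every sequence (u_n) in W^{s,1}(a,b) that is Cauchy with respect to ‖·‖_{W^{s,1}} converges in this norm to some u ∈ W^{s,1}(a,b). -/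
/-!
The Riemann–Liouville operator `I^σ` is bounded on `L¹(a, b)`, with norm at most
`(b - a)^σ / (σ Γ(σ))`: by Tonelli, `∫ₐᵇ (x - t)^(σ-1) dx ≤ (b - a)^σ / σ` for every `t`.
A `W^{s,1}`-Cauchy sequence `(uₙ, cₙ, gₙ)` therefore has `uₙ → v` and `gₙ → h` in `L¹`,
and integrating `cₘ - cₙ = I^{1-s}[uₘ - uₙ] - ∫ₐ^x (gₘ - gₙ)` over `(a, b)` shows that `cₙ → d`.
The `L¹` norm of `I^{1-s}[v] - d - ∫ₐ^x h` is at most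
`C ‖uₙ - v‖ + (b - a) (|cₙ - d| + ‖gₙ - h‖) → 0`, so `(v, d, h)` is again a representation,
and the `W^{s,1}` norm of `uₙ - v` is controlled by the same quantities.
-/

open MeasureTheory Set Filter ENNReal

/-- The `W^{s,1}`-norm of `u`, where `g` is the weak derivative of `I_{a+}^{1-s}[u]`. -/
noncomputable def WsNorm (a b s : ℝ) (u g : ℝ → ℝ) : ℝ :=
  (∫ x in Set.Ioo a b, |u x|) + (∫ x in Set.Ioo a b, |RLint a (1 - s) u x|) +
    ∫ x in Set.Ioo a b, |g x|

open Topology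

lemma cauchySeq_of_dist_le_mul {X : Type*} [PseudoMetricSpace X] {x : ℕ → X}
    {D : ℕ → ℕ → ℝ} {C : ℝ} (hC : 0 ≤ C) (hle : ∀ m n, dist (x m) (x n) ≤ C * D m n)
    (hD : ∀ ε > (0 : ℝ), ∃ N : ℕ, ∀ m ≥ N, ∀ n ≥ N, D m n < ε) : CauchySeq x := by
  refine Metric.cauchySeq_iff.2 fun ε hε => ?_
  obtain ⟨N, hN⟩ := hD (ε / (C + 1)) (by positivity)
  refine ⟨N, fun m hm n hn => (hle m n).trans_lt ?_⟩
  calc C * D m n ≤ C * (ε / (C + 1)) := mul_le_mul_of_nonneg_left (hN m hm n hn).le hC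
    _ < ε := by
      rw [mul_div_assoc', div_lt_iff₀ (by positivity)]
      nlinarith

section Lebesgue

variable {α : Type*} [MeasurableSpace α] {μ : Measure α}

lemma integral_abs_sub_eq_dist_toL1 {f g : α → ℝ} (hf : Integrable f μ) (hg : Integrable g μ) :
    ∫ x, |f x - g x| ∂μ = dist (hf.toL1 f) (hg.toL1 g) := by
  rw [dist_eq_norm, ← Integrable.toL1_sub, L1.norm_of_fun_eq_integral_norm]
  simp only [Pi.sub_apply, Real.norm_eq_abs]

lemma exists_integrable_tendsto_integral_abs_sub {f : ℕ → α → ℝ} (hf : ∀ n, Integrable (f n) μ)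
    (hcauchy : ∀ ε > (0 : ℝ), ∃ N : ℕ, ∀ m ≥ N, ∀ n ≥ N, ∫ x, |f m x - f n x| ∂μ < ε) :
    ∃ F, Integrable F μ ∧ Tendsto (fun n => ∫ x, |f n x - F x| ∂μ) atTop (𝓝 0) := by
  have hL1 : CauchySeq fun n => (hf n).toL1 (f n) := by
    refine Metric.cauchySeq_iff.2 fun ε hε => (hcauchy ε hε).imp fun N hN m hm n hn => ?_
    rw [← integral_abs_sub_eq_dist_toL1]
    exact hN m hm n hn
  obtain ⟨F, hF⟩ := cauchySeq_tendsto_of_complete hL1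
  refine ⟨F, L1.integrable_coeFn F, (tendsto_iff_dist_tendsto_zero.1 hF).congr fun n => ?_⟩
  rw [integral_abs_sub_eq_dist_toL1 (hf n) (L1.integrable_coeFn F), Integrable.toL1_coeFn]

end Lebesgue

section Primitive

variable {a b : ℝ} {q : ℝ → ℝ}

lemma intervalIntegrable_of_integrableOn_Ioo (hq : IntegrableOn q (Ioo a b)) {x : ℝ}
    (hx : x ∈ Icc a b) : IntervalIntegrable q volume a x :=
  (intervalIntegrable_iff_integrableOn_Ioo_of_le hx.1).2 (hq.mono_set (Ioo_subset_Ioo_right hx.2))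

lemma abs_intervalIntegral_le_integral_abs_Ioo (hq : IntegrableOn q (Ioo a b)) {x : ℝ}
    (hx : x ∈ Icc a b) : |∫ t in a..x, q t| ≤ ∫ t in Ioo a b, |q t| := by
  refine (intervalIntegral.abs_integral_le_integral_abs hx.1).trans ?_
  rw [intervalIntegral.integral_of_le hx.1, integral_Ioc_eq_integral_Ioo]
  exact setIntegral_mono_set hq.abs (ae_of_all _ fun _ => abs_nonneg _)
    (Ioo_subset_Ioo_right hx.2).eventuallyLE

lemma integrableOn_primitive (hq : IntegrableOn q (Ioo a b)) :
    IntegrableOn (fun x => ∫ t in a..x, q t) (Ioo a b) := by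
  have hcont := intervalIntegral.continuousOn_primitive
    ((integrableOn_Icc_iff_integrableOn_Ioo (f := q)).2 hq)
  refine (hcont.integrableOn_Icc.mono_set Ioo_subset_Icc_self).congr ?_
  filter_upwards [ae_restrict_mem measurableSet_Ioo] with x hx
  exact (intervalIntegral.integral_of_le hx.1.le).symm

lemma integral_abs_le_of_ae_abs_le (hab : a ≤ b) {F G : ℝ → ℝ} {C : ℝ}
    (hG : IntegrableOn G (Ioo a b))
    (hFG : ∀ᵐ x ∂volume.restrict (Ioo a b), |F x| ≤ |G x| + C) :
    ∫ x in Ioo a b, |F x| ≤ (∫ x in Ioo a b, |G x|) + (b - a) * C := by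
  have hC : IntegrableOn (fun _ => C) (Ioo a b) := integrableOn_const measure_Ioo_lt_top.ne
  calc ∫ x in Ioo a b, |F x| ≤ ∫ x in Ioo a b, (|G x| + C) :=
        integral_mono_of_nonneg (ae_of_all _ fun _ => abs_nonneg _) (hG.abs.add hC) hFG
    _ = (∫ x in Ioo a b, |G x|) + (b - a) * C := by
        rw [integral_add hG.abs hC, setIntegral_const, Real.volume_real_Ioo_of_le hab, smul_eq_mul]

end Primitive

section RiemannLiouville

variable {a b σ : ℝ} {w : ℝ → ℝ}

lemma lintegral_Ioo_rpow_sub (hσ : 0 < σ) {t c : ℝ} (htc : t ≤ c) :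
    ∫⁻ x in Ioo t c, ENNReal.ofReal ((x - t) ^ (σ - 1)) = ENNReal.ofReal ((c - t) ^ σ / σ) := by
  have hint : IntegrableOn (fun x : ℝ => (x - t) ^ (σ - 1)) (Ioo t c) := by
    have h := (intervalIntegral.intervalIntegrable_rpow' (a := 0) (b := c - t)
      (by linarith : (-1:ℝ) < σ - 1)).comp_sub_right t
    simp only [zero_add, sub_add_cancel] at h
    exact (intervalIntegrable_iff_integrableOn_Ioo_of_le htc).1 h
  have hnn : 0 ≤ᵐ[volume.restrict (Ioo t c)] fun x => (x - t) ^ (σ - 1) :=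
    (ae_restrict_iff' measurableSet_Ioo).2 (ae_of_all _ fun x hx =>
      Real.rpow_nonneg (sub_nonneg.2 hx.1.le) _)
  rw [← ofReal_integral_eq_lintegral_ofReal hint hnn, ← integral_Ioc_eq_integral_Ioo,
    ← intervalIntegral.integral_of_le htc,
    intervalIntegral.integral_comp_sub_right (fun y => y ^ (σ - 1)) t, sub_self,
    integral_rpow (Or.inl (by linarith : (-1:ℝ) < σ - 1)), sub_add_cancel,
    Real.zero_rpow hσ.ne', sub_zero]

/-- The integrand of `RLint a σ w x` at `(x, t)`, extended by zero to `t ≥ x` so that Fubini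
applies on `(a, b)²`. -/
noncomputable def rlIntegrand (σ : ℝ) (w : ℝ → ℝ) : ℝ × ℝ → ℝ :=
  {p : ℝ × ℝ | p.2 < p.1}.indicator fun p => w p.2 * (p.1 - p.2) ^ (σ - 1)

lemma rlIntegrand_sub (w₁ w₂ : ℝ → ℝ) :
    rlIntegrand σ (fun y => w₁ y - w₂ y) = fun p => rlIntegrand σ w₁ p - rlIntegrand σ w₂ p := by
  simp only [rlIntegrand, sub_mul, indicator_sub]

lemma RLint_eq_integral_rlIntegrand {x : ℝ} (hx : x ∈ Icc a b) :
    RLint a σ w x = (Real.Gamma σ)⁻¹ * ∫ t in Ioo a b, rlIntegrand σ w (x, t) := by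
  have hslice : (fun t => rlIntegrand σ w (x, t)) =
      (Iio x).indicator fun t => w t * (x - t) ^ (σ - 1) := by
    ext t
    simp only [rlIntegrand, indicator_apply, mem_ofPred_eq, mem_Iio]
  have hIoo : Iio x ∩ Ioo a b = Ioo a x := by
    ext t
    simp only [mem_inter_iff, mem_Iio, mem_Ioo]
    exact ⟨fun h => ⟨h.2.1, h.1⟩, fun h => ⟨h.2, h.1, h.2.trans_le hx.2⟩⟩
  rw [RLint, hslice, integral_indicator measurableSet_Iio,
    Measure.restrict_restrict measurableSet_Iio, hIoo, ← integral_Ioc_eq_integral_Ioo,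
    ← intervalIntegral.integral_of_le hx.1]

lemma lintegral_enorm_rlIntegrand_slice_le (hσ : 0 < σ) {t : ℝ} (ht : t ∈ Ioo a b) :
    ∫⁻ x in Ioo a b, ‖rlIntegrand σ w (x, t)‖ₑ ≤ ENNReal.ofReal ((b - a) ^ σ / σ) * ‖w t‖ₑ := by
  have hslice : (fun x => ‖rlIntegrand σ w (x, t)‖ₑ) =
      (Ioi t).indicator fun x => ‖w t‖ₑ * ENNReal.ofReal ((x - t) ^ (σ - 1)) := by
    ext x
    simp only [rlIntegrand, indicator_apply, mem_ofPred_eq, mem_Ioi]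
    split_ifs with hx
    · rw [enorm_mul, Real.enorm_eq_ofReal (Real.rpow_nonneg (sub_nonneg.2 hx.le) _)]
    · exact enorm_zero
  have hIoo : Ioi t ∩ Ioo a b = Ioo t b := by
    ext x
    simp only [mem_inter_iff, mem_Ioi, mem_Ioo]
    exact ⟨fun h => ⟨h.1, h.2.2⟩, fun h => ⟨h.1, ht.1.trans h.1, h.2⟩⟩
  rw [hslice, lintegral_indicator measurableSet_Ioi, Measure.restrict_restrict measurableSet_Ioi,
    hIoo, lintegral_const_mul' _ _ enorm_ne_top, lintegral_Ioo_rpow_sub hσ ht.2.le, mul_comm]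
  gcongr
  · exact sub_nonneg.2 ht.2.le
  · exact ht.1.le

lemma aestronglyMeasurable_rlIntegrand (hw : IntegrableOn w (Ioo a b)) :
    AEStronglyMeasurable (rlIntegrand σ w)
      ((volume.restrict (Ioo a b)).prod (volume.restrict (Ioo a b))) :=
  (hw.aestronglyMeasurable.comp_snd.mul
    ((measurable_fst.sub measurable_snd).pow_const _).aestronglyMeasurable).indicator
    (measurableSet_lt measurable_snd measurable_fst)

lemma lintegral_enorm_rlIntegrand_le (hσ : 0 < σ) (hw : IntegrableOn w (Ioo a b)) :
    ∫⁻ p, ‖rlIntegrand σ w p‖ₑ ∂(volume.restrict (Ioo a b)).prod (volume.restrict (Ioo a b)) ≤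
      ENNReal.ofReal ((b - a) ^ σ / σ) * ∫⁻ t in Ioo a b, ‖w t‖ₑ := by
  rw [lintegral_prod_symm _ (aestronglyMeasurable_rlIntegrand hw).enorm,
    ← lintegral_const_mul' _ _ ofReal_ne_top]
  refine lintegral_mono_ae ?_
  filter_upwards [ae_restrict_mem measurableSet_Ioo] with t ht
  exact lintegral_enorm_rlIntegrand_slice_le hσ ht

lemma integrable_rlIntegrand (hσ : 0 < σ) (hw : IntegrableOn w (Ioo a b)) :
    Integrable (rlIntegrand σ w) ((volume.restrict (Ioo a b)).prod (volume.restrict (Ioo a b))) :=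
  ⟨aestronglyMeasurable_rlIntegrand hw,
    (lintegral_enorm_rlIntegrand_le hσ hw).trans_lt (mul_lt_top ofReal_lt_top hw.2)⟩

lemma integral_abs_rlIntegrand_le (hab : a ≤ b) (hσ : 0 < σ) (hw : IntegrableOn w (Ioo a b)) :
    ∫ p, |rlIntegrand σ w p| ∂(volume.restrict (Ioo a b)).prod (volume.restrict (Ioo a b)) ≤
      (b - a) ^ σ / σ * ∫ t in Ioo a b, |w t| := by
  have hC : 0 ≤ (b - a) ^ σ / σ := div_nonneg (Real.rpow_nonneg (sub_nonneg.2 hab) _) hσ.le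
  simp only [← Real.norm_eq_abs]
  rw [integral_norm_eq_lintegral_enorm (aestronglyMeasurable_rlIntegrand hw),
    integral_norm_eq_lintegral_enorm hw.aestronglyMeasurable, ← toReal_ofReal hC, ← toReal_mul]
  exact toReal_mono (mul_ne_top ofReal_ne_top hw.2.ne) (lintegral_enorm_rlIntegrand_le hσ hw)

/-- A bound for the norm of `RLint a σ` as an operator on `L¹(a, b)`. -/
noncomputable def rlBound (a b σ : ℝ) : ℝ :=
  (Real.Gamma σ)⁻¹ * ((b - a) ^ σ / σ)

lemma rlBound_nonneg (hab : a ≤ b) (hσ : 0 < σ) : 0 ≤ rlBound a b σ :=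
  mul_nonneg (inv_nonneg.2 (Real.Gamma_pos_of_pos hσ).le)
    (div_nonneg (Real.rpow_nonneg (sub_nonneg.2 hab) _) hσ.le)

lemma integrableOn_RLint (hσ : 0 < σ) (hw : IntegrableOn w (Ioo a b)) :
    IntegrableOn (RLint a σ w) (Ioo a b) := by
  refine (((integrable_rlIntegrand hσ hw).integral_prod_left).const_mul (Real.Gamma σ)⁻¹).congr ?_
  filter_upwards [ae_restrict_mem measurableSet_Ioo] with x hx
  exact (RLint_eq_integral_rlIntegrand (Ioo_subset_Icc_self hx)).symm

lemma integral_abs_RLint_le (hab : a ≤ b) (hσ : 0 < σ) (hw : IntegrableOn w (Ioo a b)) :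
    ∫ x in Ioo a b, |RLint a σ w x| ≤ rlBound a b σ * ∫ x in Ioo a b, |w x| := by
  set μ := volume.restrict (Ioo a b)
  have hΓ : 0 ≤ (Real.Gamma σ)⁻¹ := inv_nonneg.2 (Real.Gamma_pos_of_pos hσ).le
  have hG := (integrable_rlIntegrand hσ hw).abs
  calc ∫ x in Ioo a b, |RLint a σ w x|
      ≤ ∫ x in Ioo a b, (Real.Gamma σ)⁻¹ * ∫ t in Ioo a b, |rlIntegrand σ w (x, t)| := by
        refine integral_mono_of_nonneg (ae_of_all _ fun _ => abs_nonneg _)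
          (hG.integral_prod_left.const_mul _) ?_
        filter_upwards [ae_restrict_mem measurableSet_Ioo] with x hx
        rw [RLint_eq_integral_rlIntegrand (Ioo_subset_Icc_self hx), abs_mul, abs_of_nonneg hΓ]
        exact mul_le_mul_of_nonneg_left (abs_integral_le_integral_abs) hΓ
    _ = (Real.Gamma σ)⁻¹ * ∫ p, |rlIntegrand σ w p| ∂μ.prod μ := by
        rw [integral_const_mul, integral_prod _ hG]
    _ ≤ (Real.Gamma σ)⁻¹ * ((b - a) ^ σ / σ * ∫ t in Ioo a b, |w t|) := by
        gcongr
        exact integral_abs_rlIntegrand_le hab hσ hw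
    _ = rlBound a b σ * ∫ x in Ioo a b, |w x| := by
        rw [rlBound, mul_assoc]

lemma RLint_sub_ae (hσ : 0 < σ) {w₁ w₂ : ℝ → ℝ} (hw₁ : IntegrableOn w₁ (Ioo a b))
    (hw₂ : IntegrableOn w₂ (Ioo a b)) :
    ∀ᵐ x ∂volume.restrict (Ioo a b),
      RLint a σ (fun y => w₁ y - w₂ y) x = RLint a σ w₁ x - RLint a σ w₂ x := by
  filter_upwards [(integrable_rlIntegrand hσ hw₁).prod_right_ae,
    (integrable_rlIntegrand hσ hw₂).prod_right_ae, ae_restrict_mem measurableSet_Ioo]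
    with x h₁ h₂ hx
  have hx' := Ioo_subset_Icc_self hx
  rw [RLint_eq_integral_rlIntegrand hx', RLint_eq_integral_rlIntegrand hx',
    RLint_eq_integral_rlIntegrand hx', rlIntegrand_sub, integral_sub h₁ h₂, mul_sub]

end RiemannLiouville

section Representation

variable {a b σ : ℝ}

lemma integral_abs_RLint_sub_primitive_le (hab : a ≤ b) (hσ : 0 < σ) {w w' q q' : ℝ → ℝ}
    {c c' : ℝ} (hw : IntegrableOn w (Ioo a b)) (hw' : IntegrableOn w' (Ioo a b))
    (hq : IntegrableOn q (Ioo a b)) (hq' : IntegrableOn q' (Ioo a b))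
    (hrep : ∀ᵐ x ∂volume.restrict (Ioo a b), RLint a σ w' x = c' + ∫ t in a..x, q' t) :
    ∫ x in Ioo a b, |RLint a σ w x - (c + ∫ t in a..x, q t)| ≤
      rlBound a b σ * (∫ x in Ioo a b, |w' x - w x|) +
        (b - a) * (|c' - c| + ∫ x in Ioo a b, |q' x - q x|) := by
  have hpt : ∀ᵐ x ∂volume.restrict (Ioo a b), |RLint a σ w x - (c + ∫ t in a..x, q t)| ≤
      |RLint a σ (fun y => w' y - w y) x| + (|c' - c| + ∫ x in Ioo a b, |q' x - q x|) := by
    filter_upwards [hrep, RLint_sub_ae hσ hw' hw, ae_restrict_mem measurableSet_Ioo]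
      with x hrepx hsub hx
    have hx' := Ioo_subset_Icc_self hx
    have hprim : ∫ t in a..x, (q' t - q t) = (∫ t in a..x, q' t) - ∫ t in a..x, q t :=
      intervalIntegral.integral_sub (intervalIntegrable_of_integrableOn_Ioo hq' hx')
        (intervalIntegrable_of_integrableOn_Ioo hq hx')
    calc |RLint a σ w x - (c + ∫ t in a..x, q t)|
        = |RLint a σ (fun y => w' y - w y) x - ((c' - c) + ∫ t in a..x, (q' t - q t))| := by
          rw [hsub, hprim, hrepx, ← abs_neg]
          ring_nf
      _ ≤ |RLint a σ (fun y => w' y - w y) x| + (|c' - c| + |∫ t in a..x, (q' t - q t)|) :=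
          (abs_sub _ _).trans (add_le_add_right (abs_add_le _ _) _)
      _ ≤ _ := by
          gcongr
          exact abs_intervalIntegral_le_integral_abs_Ioo (hq'.sub hq) hx'
  calc _ ≤ (∫ x in Ioo a b, |RLint a σ (fun y => w' y - w y) x|) +
        (b - a) * (|c' - c| + ∫ x in Ioo a b, |q' x - q x|) :=
        integral_abs_le_of_ae_abs_le hab (integrableOn_RLint hσ (hw'.sub hw)) hpt
    _ ≤ _ := by
        gcongr
        exact integral_abs_RLint_le hab hσ (hw'.sub hw)

lemma abs_sub_le_of_RLint_eq (hab : a < b) (hσ : 0 < σ) {w₁ w₂ q₁ q₂ : ℝ → ℝ} {c₁ c₂ : ℝ}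
    (hw₁ : IntegrableOn w₁ (Ioo a b)) (hw₂ : IntegrableOn w₂ (Ioo a b))
    (hq₁ : IntegrableOn q₁ (Ioo a b)) (hq₂ : IntegrableOn q₂ (Ioo a b))
    (h₁ : ∀ᵐ x ∂volume.restrict (Ioo a b), RLint a σ w₁ x = c₁ + ∫ t in a..x, q₁ t)
    (h₂ : ∀ᵐ x ∂volume.restrict (Ioo a b), RLint a σ w₂ x = c₂ + ∫ t in a..x, q₂ t) :
    |c₁ - c₂| ≤ rlBound a b σ / (b - a) * (∫ x in Ioo a b, |w₁ x - w₂ x|) +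
      ∫ x in Ioo a b, |q₁ x - q₂ x| := by
  have hba : 0 < b - a := sub_pos.2 hab
  -- `(w₂, c₁, q₂)` misses the representation by exactly the constant `c₂ - c₁`.
  have hdefect : ∫ x in Ioo a b, |RLint a σ w₂ x - (c₁ + ∫ t in a..x, q₂ t)| =
      (b - a) * |c₁ - c₂| := by
    rw [← smul_eq_mul, ← Real.volume_real_Ioo_of_le hab.le, ← setIntegral_const]
    refine integral_congr_ae ?_
    filter_upwards [h₂] with x hx
    rw [hx, abs_sub_comm]
    ring_nf
  have key := integral_abs_RLint_sub_primitive_le (c := c₁) hab.le hσ hw₂ hw₁ hq₂ hq₁ h₁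
  rw [hdefect, sub_self, abs_zero, zero_add] at key
  rw [div_mul_eq_mul_div, ← sub_le_iff_le_add, le_div_iff₀ hba]
  linarith

lemma ae_RLint_eq_of_tendsto (hab : a ≤ b) (hσ : 0 < σ) {w q : ℕ → ℝ → ℝ} {c : ℕ → ℝ}
    {w₀ q₀ : ℝ → ℝ} {c₀ : ℝ} (hw : ∀ n, IntegrableOn (w n) (Ioo a b))
    (hq : ∀ n, IntegrableOn (q n) (Ioo a b)) (hw₀ : IntegrableOn w₀ (Ioo a b))
    (hq₀ : IntegrableOn q₀ (Ioo a b))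
    (hrep : ∀ n, ∀ᵐ x ∂volume.restrict (Ioo a b), RLint a σ (w n) x = c n + ∫ t in a..x, q n t)
    (hw_lim : Tendsto (fun n => ∫ x in Ioo a b, |w n x - w₀ x|) atTop (𝓝 0))
    (hc_lim : Tendsto c atTop (𝓝 c₀))
    (hq_lim : Tendsto (fun n => ∫ x in Ioo a b, |q n x - q₀ x|) atTop (𝓝 0)) :
    ∀ᵐ x ∂volume.restrict (Ioo a b), RLint a σ w₀ x = c₀ + ∫ t in a..x, q₀ t := by
  set F := fun x => RLint a σ w₀ x - (c₀ + ∫ t in a..x, q₀ t)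
  have hF : IntegrableOn F (Ioo a b) := (integrableOn_RLint hσ hw₀).sub
    ((integrableOn_const measure_Ioo_lt_top.ne).add (integrableOn_primitive hq₀))
  have hbound_lim : Tendsto (fun n => rlBound a b σ * (∫ x in Ioo a b, |w n x - w₀ x|) +
      (b - a) * (|c n - c₀| + ∫ x in Ioo a b, |q n x - q₀ x|)) atTop (𝓝 0) := by
    simpa using (hw_lim.const_mul _).add (((hc_lim.sub_const c₀).abs.add hq_lim).const_mul _)
  have hzero : ∫ x in Ioo a b, |F x| = 0 :=
    le_antisymm (ge_of_tendsto' hbound_lim fun n =>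
        integral_abs_RLint_sub_primitive_le hab hσ hw₀ (hw n) hq₀ (hq n) (hrep n))
      (integral_nonneg fun _ => abs_nonneg _)
  filter_upwards [(integral_eq_zero_iff_of_nonneg (fun _ => abs_nonneg _) hF.abs).1 hzero]
    with x hx
  exact sub_eq_zero.1 (abs_eq_zero.1 hx)

end Representation

section SobolevNorm

variable {a b s : ℝ}

lemma WsNorm_nonneg (p q : ℝ → ℝ) : 0 ≤ WsNorm a b s p q :=
  add_nonneg (add_nonneg (integral_nonneg fun _ => abs_nonneg _)
    (integral_nonneg fun _ => abs_nonneg _)) (integral_nonneg fun _ => abs_nonneg _)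

lemma integral_abs_le_WsNorm_left (p q : ℝ → ℝ) :
    ∫ x in Ioo a b, |p x| ≤ WsNorm a b s p q :=
  (le_add_of_nonneg_right (integral_nonneg fun _ => abs_nonneg _)).trans
    (le_add_of_nonneg_right (integral_nonneg fun _ => abs_nonneg _))

lemma integral_abs_le_WsNorm_right (p q : ℝ → ℝ) :
    ∫ x in Ioo a b, |q x| ≤ WsNorm a b s p q :=
  le_add_of_nonneg_left (add_nonneg (integral_nonneg fun _ => abs_nonneg _)
    (integral_nonneg fun _ => abs_nonneg _))

lemma WsNorm_le (hab : a ≤ b) (hs : s < 1) {p : ℝ → ℝ} (hp : IntegrableOn p (Ioo a b))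
    (q : ℝ → ℝ) :
    WsNorm a b s p q ≤
      (1 + rlBound a b (1 - s)) * (∫ x in Ioo a b, |p x|) + ∫ x in Ioo a b, |q x| := by
  have := integral_abs_RLint_le hab (sub_pos.2 hs) hp
  rw [WsNorm]
  linarith

lemma cauchySeq_of_RLint_eq (hab : a < b) (hs : s < 1) {u g : ℕ → ℝ → ℝ} {c : ℕ → ℝ}
    (hu : ∀ n, IntegrableOn (u n) (Ioo a b)) (hg : ∀ n, IntegrableOn (g n) (Ioo a b))
    (hrep : ∀ n, ∀ᵐ x ∂volume.restrict (Ioo a b),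
      RLint a (1 - s) (u n) x = c n + ∫ t in a..x, g n t)
    (hcauchy : ∀ ε > (0 : ℝ), ∃ N : ℕ, ∀ m ≥ N, ∀ n ≥ N,
      WsNorm a b s (fun x => u m x - u n x) (fun x => g m x - g n x) < ε) :
    CauchySeq c := by
  have hK : 0 ≤ rlBound a b (1 - s) / (b - a) :=
    div_nonneg (rlBound_nonneg hab.le (sub_pos.2 hs)) (sub_pos.2 hab).le
  refine cauchySeq_of_dist_le_mul (add_nonneg hK zero_le_one) (fun m n => ?_) hcauchy
  rw [Real.dist_eq, add_one_mul]
  exact (abs_sub_le_of_RLint_eq hab (sub_pos.2 hs) (hu m) (hu n) (hg m) (hg n) (hrep m)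
    (hrep n)).trans (add_le_add (mul_le_mul_of_nonneg_left (integral_abs_le_WsNorm_left _ _) hK)
      (integral_abs_le_WsNorm_right _ _))

end SobolevNorm

/-- the Riemann–Liouville fractional Sobolev space `W^{s,1}(a,b)` is
complete: every Cauchy sequence converges in the `W^{s,1}`-norm. -/
theorem rl_sobolev_complete (a b s : ℝ) (hab : a < b) (hs : s ∈ Set.Ioo (0:ℝ) 1)
    (u : ℕ → ℝ → ℝ) (c : ℕ → ℝ) (g : ℕ → ℝ → ℝ)
    (hu : ∀ n, IntegrableOn (u n) (Set.Ioo a b))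
    (hg : ∀ n, IntegrableOn (g n) (Set.Ioo a b))
    (hrep : ∀ n, ∀ᵐ x ∂(volume.restrict (Set.Ioo a b)),
      RLint a (1 - s) (u n) x = c n + ∫ t in a..x, g n t)
    (hcauchy : ∀ ε > (0:ℝ), ∃ N : ℕ, ∀ m ≥ N, ∀ n ≥ N,
      WsNorm a b s (fun x => u m x - u n x) (fun x => g m x - g n x) < ε) :
    ∃ (v : ℝ → ℝ) (d : ℝ) (h : ℝ → ℝ),
      IntegrableOn v (Set.Ioo a b) ∧ IntegrableOn h (Set.Ioo a b) ∧
      (∀ᵐ x ∂(volume.restrict (Set.Ioo a b)),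
        RLint a (1 - s) v x = d + ∫ t in a..x, h t) ∧
      Filter.Tendsto
        (fun n => WsNorm a b s (fun x => u n x - v x) (fun x => g n x - h x))
        Filter.atTop (nhds 0) := by
  obtain ⟨v, hv, hv_lim⟩ := exists_integrable_tendsto_integral_abs_sub hu fun ε hε =>
    (hcauchy ε hε).imp fun N hN m hm n hn =>
      (integral_abs_le_WsNorm_left _ _).trans_lt (hN m hm n hn)
  obtain ⟨h, hh, hh_lim⟩ := exists_integrable_tendsto_integral_abs_sub hg fun ε hε =>
    (hcauchy ε hε).imp fun N hN m hm n hn =>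
      (integral_abs_le_WsNorm_right _ _).trans_lt (hN m hm n hn)
  obtain ⟨d, hd⟩ :=
    cauchySeq_tendsto_of_complete (cauchySeq_of_RLint_eq hab hs.2 hu hg hrep hcauchy)
  refine ⟨v, d, h, hv, hh,
    ae_RLint_eq_of_tendsto hab.le (sub_pos.2 hs.2) hu hg hv hh hrep hv_lim hd hh_lim, ?_⟩
  refine squeeze_zero (fun n => WsNorm_nonneg _ _)
    (fun n => WsNorm_le hab.le hs.2 ((hu n).sub hv) _) ?_
  simpa using (hv_lim.const_mul _).add hh_lim
end
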